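/- Let H, H_n be closed subspaces of a Hilbert space H_0 with orthogonal projections P, P_n, P_n → P strongly. Let A ∈ L(H), A_n ∈ L(H_n) with all A_n compact and (A_n) discretely compact. If A_n P_n → A P strongly and A_n* P_n → A* P strongly, then A is compact and A_n P_n → A P in operator norm. -/

import Mathlib

/-!
Write `T_n = A_n P_n` and `S = A P` as operators on `H₀`. For a bounded sequence `x_k` and
indices `n_k → ∞`, discrete compactness makes `T_{n_k} x_k` converge along a subsequence, and a
diagonal choice of indices, using `T_n → S` strongly, does the same for `S x_k`. The limit `w` of
`(T_{n_k} - S) x_k` is then zero: `⟪(T_{n_k} - S) x_k, w⟫ = ⟪x_k, (T_{n_k}* - S*) w⟫ → 0` because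
`T_n* → S*` strongly. Applied to almost-norming vectors `x_k`, this gives `‖T_n - S‖ → 0`, and
`A` is compact as a compression of the norm limit `S` of the compact operators `T_n`.
-/

open Filter Topology

/-- Stummel's notion of a **discretely compact sequence** of bounded operators
`A_n ∈ L(H_n)`, where `H, H_n` are closed subspaces of a Hilbert space `H₀`. -/
def DiscretelyCompact {H₀ : Type*} [NormedAddCommGroup H₀] [InnerProductSpace ℂ H₀]
    (H : Submodule ℂ H₀) (Hn : ℕ → Submodule ℂ H₀)
    (A : ∀ n, Hn n →L[ℂ] Hn n) : Prop :=
  ∀ φ : ℕ → ℕ, StrictMono φ →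
    ∀ x : ∀ k, Hn (φ k), (∃ M : ℝ, ∀ k, ‖x k‖ ≤ M) →
      ∃ ψ : ℕ → ℕ, StrictMono ψ ∧ ∃ y ∈ H,
        Tendsto (fun k => ((A (φ (ψ k)) (x (ψ k)) : H₀))) atTop (𝓝 y)

open ContinuousLinearMap

section Normed

variable {𝕜 E F : Type*} [DenselyNormedField 𝕜] [NormedAddCommGroup E] [NormedSpace 𝕜 E]
  [NormedAddCommGroup F] [NormedSpace 𝕜 F]

/-- `DiscretelyCompact` for operators acting on fixed spaces, with no constraint on the limit. -/
def IsDiscretelyCompact (T : ℕ → E →L[𝕜] F) : Prop :=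
  ∀ φ : ℕ → ℕ, StrictMono φ → ∀ x : ℕ → E, (∃ M : ℝ, ∀ k, ‖x k‖ ≤ M) →
    ∃ ψ : ℕ → ℕ, StrictMono ψ ∧ ∃ y, Tendsto (fun k => T (φ (ψ k)) (x (ψ k))) atTop (𝓝 y)

theorem IsDiscretelyCompact.exists_subseq_tendsto_limit_apply {T : ℕ → E →L[𝕜] F}
    (hT : IsDiscretelyCompact T) {S : E →L[𝕜] F}
    (hS : ∀ v, Tendsto (fun n => T n v) atTop (𝓝 (S v)))
    {x : ℕ → E} (hx : ∃ M : ℝ, ∀ k, ‖x k‖ ≤ M) :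
    ∃ ψ : ℕ → ℕ, StrictMono ψ ∧ ∃ y, Tendsto (fun k => S (x (ψ k))) atTop (𝓝 y) := by
  obtain ⟨φ, hφ, hclose⟩ : ∃ φ : ℕ → ℕ, StrictMono φ ∧
      ∀ k, dist (T (φ k) (x k)) (S (x k)) < 1 / ((k : ℝ) + 1) :=
    extraction_forall_of_eventually fun k =>
      (tendsto_iff_dist_tendsto_zero.1 (hS (x k))).eventually (gt_mem_nhds (by positivity))
  obtain ⟨ψ, hψ, y, hy⟩ := hT φ hφ x hx
  refine ⟨ψ, hψ, y, hy.congr_dist ?_⟩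
  exact squeeze_zero (fun _ => dist_nonneg) (fun k => (hclose (ψ k)).le)
    (tendsto_one_div_add_atTop_nhds_zero_nat.comp hψ.tendsto_atTop)

theorem tendsto_opNorm_zero_of_forall_exists_subseq {R : ℕ → E →L[𝕜] F}
    (h : ∀ φ : ℕ → ℕ, StrictMono φ → ∀ x : ℕ → E, (∀ k, ‖x k‖ ≤ 1) →
      ∃ ψ : ℕ → ℕ, StrictMono ψ ∧ Tendsto (fun k => R (φ (ψ k)) (x (ψ k))) atTop (𝓝 0)) :
    Tendsto (fun n => ‖R n‖) atTop (𝓝 0) := by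
  by_contra hR
  obtain ⟨ε, hε, hfreq⟩ : ∃ ε > 0, ∃ᶠ n in atTop, ε ≤ ‖R n‖ := by
    simpa [Metric.tendsto_nhds, Filter.not_eventually, frequently_atTop] using hR
  obtain ⟨φ, hφ, hφε⟩ := extraction_of_frequently_atTop hfreq
  have hnorming : ∀ k, ∃ v : E, ‖v‖ ≤ 1 ∧ ε / 2 < ‖R (φ k) v‖ := fun k => by
    obtain ⟨v, hv, hRv⟩ := (R (φ k)).exists_lt_apply_of_lt_opNorm
      ((half_lt_self hε).trans_le (hφε k))
    exact ⟨v, hv.le, hRv⟩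
  choose x hx hRx using hnorming
  obtain ⟨ψ, -, hψ⟩ := h φ hφ x hx
  obtain ⟨k, hk⟩ :=
    ((tendsto_zero_iff_norm_tendsto_zero.1 hψ).eventually (gt_mem_nhds (half_pos hε))).exists
  exact (hRx (ψ k)).not_gt hk

end Normed

section InnerProduct

variable {𝕜 E : Type*} [RCLike 𝕜] [NormedAddCommGroup E] [InnerProductSpace 𝕜 E] [CompleteSpace E]

theorem eq_zero_of_tendsto_sub_apply {T : ℕ → E →L[𝕜] E} {S : E →L[𝕜] E}
    (hadj : ∀ u, Tendsto (fun n => adjoint (T n) u) atTop (𝓝 (adjoint S u)))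
    {x : ℕ → E} {M : ℝ} (hx : ∀ k, ‖x k‖ ≤ M) {w : E}
    (hw : Tendsto (fun k => (T k - S) (x k)) atTop (𝓝 w)) : w = 0 := by
  have hweak : Tendsto (fun k => inner 𝕜 ((T k - S) (x k)) w) atTop (𝓝 0) := by
    have hdiff : Tendsto (fun k => M * ‖adjoint (T k) w - adjoint S w‖) atTop (𝓝 0) := by
      simpa using ((hadj w).sub_const (adjoint S w)).norm.const_mul M
    refine squeeze_zero_norm (fun k => ?_) hdiff
    calc ‖inner 𝕜 ((T k - S) (x k)) w‖
        = ‖inner 𝕜 (x k) (adjoint (T k) w - adjoint S w)‖ := by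
          rw [inner_sub_right, sub_apply, inner_sub_left, adjoint_inner_right,
            adjoint_inner_right]
      _ ≤ ‖x k‖ * ‖adjoint (T k) w - adjoint S w‖ := norm_inner_le_norm _ _
      _ ≤ M * ‖adjoint (T k) w - adjoint S w‖ := by gcongr; exact hx k
  exact inner_self_eq_zero.1 (tendsto_nhds_unique (hw.inner tendsto_const_nhds) hweak)

variable {T : ℕ → E →L[𝕜] E} {S : E →L[𝕜] E}

theorem IsDiscretelyCompact.exists_subseq_tendsto_sub_apply_zero (hT : IsDiscretelyCompact T)
    (hS : ∀ v, Tendsto (fun n => T n v) atTop (𝓝 (S v)))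
    (hadj : ∀ u, Tendsto (fun n => adjoint (T n) u) atTop (𝓝 (adjoint S u)))
    {φ : ℕ → ℕ} (hφ : StrictMono φ) {x : ℕ → E} (hx : ∀ k, ‖x k‖ ≤ 1) :
    ∃ ψ : ℕ → ℕ, StrictMono ψ ∧
      Tendsto (fun k => (T (φ (ψ k)) - S) (x (ψ k))) atTop (𝓝 0) := by
  obtain ⟨ψ₁, hψ₁, y, hy⟩ := hT φ hφ x ⟨1, hx⟩
  obtain ⟨ψ₂, hψ₂, z, hz⟩ :=
    hT.exists_subseq_tendsto_limit_apply hS (x := fun k => x (ψ₁ k)) ⟨1, fun k => hx _⟩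
  have hlim : Tendsto (fun k => (T (φ (ψ₁ (ψ₂ k))) - S) (x (ψ₁ (ψ₂ k)))) atTop (𝓝 (y - z)) :=
    (hy.comp hψ₂.tendsto_atTop).sub hz
  have hsub : StrictMono (φ ∘ ψ₁ ∘ ψ₂) := hφ.comp (hψ₁.comp hψ₂)
  refine ⟨ψ₁ ∘ ψ₂, hψ₁.comp hψ₂, ?_⟩
  rwa [eq_zero_of_tendsto_sub_apply (fun u => (hadj u).comp hsub.tendsto_atTop)
    (fun k => hx _) hlim] at hlim

theorem IsDiscretelyCompact.tendsto_opNorm_sub (hT : IsDiscretelyCompact T)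
    (hS : ∀ v, Tendsto (fun n => T n v) atTop (𝓝 (S v)))
    (hadj : ∀ u, Tendsto (fun n => adjoint (T n) u) atTop (𝓝 (adjoint S u))) :
    Tendsto (fun n => ‖T n - S‖) atTop (𝓝 0) :=
  tendsto_opNorm_zero_of_forall_exists_subseq fun _ hφ _ hx =>
    hT.exists_subseq_tendsto_sub_apply_zero hS hadj hφ hx

end InnerProduct

namespace Submodule

variable {𝕜 E : Type*} [RCLike 𝕜] [NormedAddCommGroup E] [InnerProductSpace 𝕜 E]
  (K : Submodule 𝕜 E) [CompleteSpace K]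

/-- The operator `T P_K` on the ambient space. -/
noncomputable def extendByZero (T : K →L[𝕜] K) : E →L[𝕜] E :=
  K.subtypeL.comp (T.comp K.orthogonalProjectionOnto)

@[simp]
theorem extendByZero_apply (T : K →L[𝕜] K) (v : E) :
    K.extendByZero T v = T (K.orthogonalProjectionOnto v) :=
  rfl

theorem adjoint_extendByZero [CompleteSpace E] (T : K →L[𝕜] K) :
    adjoint (K.extendByZero T) = K.extendByZero (adjoint T) := by
  simp only [extendByZero, adjoint_comp, adjoint_subtypeL, adjoint_orthogonalProjectionOnto,
    comp_assoc]

theorem isCompactOperator_extendByZero_iff (T : K →L[𝕜] K) :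
    IsCompactOperator (K.extendByZero T) ↔ IsCompactOperator T := by
  refine ⟨fun h => ?_, fun h => (h.comp_clm K.orthogonalProjectionOnto).clm_comp K.subtypeL⟩
  have hT : K.orthogonalProjectionOnto.comp ((K.extendByZero T).comp K.subtypeL) = T := by
    ext v
    simp [orthogonalProjectionOnto_mem_subspace_eq_self]
  exact hT ▸ (h.comp_clm K.subtypeL).clm_comp K.orthogonalProjectionOnto

end Submodule

theorem DiscretelyCompact.isDiscretelyCompact_extendByZero {H₀ : Type*} [NormedAddCommGroup H₀]
    [InnerProductSpace ℂ H₀] {H : Submodule ℂ H₀} {Hn : ℕ → Submodule ℂ H₀}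
    [∀ n, CompleteSpace (Hn n)] {A : ∀ n, Hn n →L[ℂ] Hn n} (hA : DiscretelyCompact H Hn A) :
    IsDiscretelyCompact fun n => (Hn n).extendByZero (A n) := by
  rintro φ hφ x ⟨M, hM⟩
  obtain ⟨ψ, hψ, y, -, hy⟩ := hA φ hφ (fun k => (Hn (φ k)).orthogonalProjectionOnto (x k))
    ⟨M, fun k => ((Hn (φ k)).norm_orthogonalProjectionOnto_apply_le (x k)).trans (hM k)⟩
  exact ⟨ψ, hψ, y, hy⟩

theorem stmt7_general {H₀ : Type*} [NormedAddCommGroup H₀] [InnerProductSpace ℂ H₀]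
    [CompleteSpace H₀] (H : Submodule ℂ H₀) (Hn : ℕ → Submodule ℂ H₀)
    [CompleteSpace H] [∀ n, CompleteSpace (Hn n)]
    (A : H →L[ℂ] H) (An : ∀ n, Hn n →L[ℂ] Hn n)
    (hcpt : ∀ n, IsCompactOperator (An n))
    (hdc : DiscretelyCompact H Hn An)
    (hAs : ∀ y : H₀, Tendsto
      (fun n => ((An n (Submodule.orthogonalProjectionOnto (Hn n) y) : H₀))) atTop
      (𝓝 ((A (Submodule.orthogonalProjectionOnto H y) : H₀))))
    (hAadj : ∀ y : H₀, Tendsto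
      (fun n => ((ContinuousLinearMap.adjoint (An n)
        (Submodule.orthogonalProjectionOnto (Hn n) y) : H₀))) atTop
      (𝓝 ((ContinuousLinearMap.adjoint A (Submodule.orthogonalProjectionOnto H y) : H₀)))) :
    IsCompactOperator A ∧
    Tendsto (fun n =>
      ‖(Hn n).subtypeL.comp ((An n).comp (Submodule.orthogonalProjectionOnto (Hn n))) -
        H.subtypeL.comp (A.comp (Submodule.orthogonalProjectionOnto H))‖) atTop (𝓝 0) := by
  have hadj : ∀ u, Tendsto (fun n => adjoint ((Hn n).extendByZero (An n)) u) atTop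
      (𝓝 (adjoint (H.extendByZero A) u)) := by
    simpa only [Submodule.adjoint_extendByZero, Submodule.extendByZero_apply] using hAadj
  have hnorm : Tendsto (fun n => ‖(Hn n).extendByZero (An n) - H.extendByZero A‖) atTop (𝓝 0) :=
    hdc.isDiscretelyCompact_extendByZero.tendsto_opNorm_sub hAs hadj
  refine ⟨(H.isCompactOperator_extendByZero_iff A).1 ?_, hnorm⟩
  exact isCompactOperator_of_tendsto (tendsto_iff_norm_sub_tendsto_zero.2 hnorm)
    (.of_forall fun n => ((Hn n).isCompactOperator_extendByZero_iff (An n)).2 (hcpt n))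

/-- **Strong convergence implies norm convergence for discretely compact
sequences of compact operators:** with `P, P_n` the orthogonal projections of
the Hilbert space `H₀` onto complete subspaces `H, H_n` and `P_n → P` strongly;
if all `A_n ∈ L(H_n)` are compact, `(A_n)` is discretely compact, and
`A_n P_n → A P`, `A_n* P_n → A* P` strongly, then `A` is compact and
`A_n P_n → A P` in operator norm. -/
theorem stmt7 {H₀ : Type*} [NormedAddCommGroup H₀] [InnerProductSpace ℂ H₀]
    [CompleteSpace H₀] (H : Submodule ℂ H₀) (Hn : ℕ → Submodule ℂ H₀)
    [CompleteSpace H] [∀ n, CompleteSpace (Hn n)]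
    (A : H →L[ℂ] H) (An : ∀ n, Hn n →L[ℂ] Hn n)
    (hcpt : ∀ n, IsCompactOperator (An n))
    (hdc : DiscretelyCompact H Hn An)
    (hPs : ∀ y : H₀, Tendsto (fun n => ((Submodule.orthogonalProjectionOnto (Hn n) y : H₀)))
      atTop (𝓝 ((Submodule.orthogonalProjectionOnto H y : H₀))))
    (hAs : ∀ y : H₀, Tendsto
      (fun n => ((An n (Submodule.orthogonalProjectionOnto (Hn n) y) : H₀))) atTop
      (𝓝 ((A (Submodule.orthogonalProjectionOnto H y) : H₀))))
    (hAadj : ∀ y : H₀, Tendsto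
      (fun n => ((ContinuousLinearMap.adjoint (An n)
        (Submodule.orthogonalProjectionOnto (Hn n) y) : H₀))) atTop
      (𝓝 ((ContinuousLinearMap.adjoint A (Submodule.orthogonalProjectionOnto H y) : H₀)))) :
    IsCompactOperator A ∧
    Tendsto (fun n =>
      ‖(Hn n).subtypeL.comp ((An n).comp (Submodule.orthogonalProjectionOnto (Hn n))) -
        H.subtypeL.comp (A.comp (Submodule.orthogonalProjectionOnto H))‖) atTop (𝓝 0) :=
  stmt7_general H Hn A An hcpt hdc hAs hAadj
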